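/- arXiv:0812.4390 — 2 statements merged into one kernel-verified Lean document; each statement's English description precedes it below -/
import Mathlib

section
/- Let x₁, x₂ ∈ ℝ^d and let e₁, e₂ be unit vectors. Define the half-balls B⁺(xᵢ, eᵢ) = {y ∈ B_R(xᵢ) : (y − xᵢ)·eᵢ ≥ 0}. Then there exists a constant K > 0 depending only on d and R such that L^d(B⁺(x₁,e₁) △ B⁺(x₂,e₂)) ≤ K(|x₂ − x₁| + |e₂ − e₁|), where △ denotes symmetric difference. -/
open MeasureTheory
open scoped RealInnerProductSpace

/-- The half-ball of radius `R` centered at `x` in the direction `e`. -/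
def halfBall {d : ℕ} (R : ℝ) (x e : EuclideanSpace ℝ (Fin d)) :
    Set (EuclideanSpace ℝ (Fin d)) :=
  {y ∈ Metric.closedBall x R | 0 ≤ ⟪y - x, e⟫}

/-!
A point of `B⁺(x₁, e₁) \ B⁺(x₂, e₂)` either leaves `B_R(x₂)`, and then lies in the annulus
`R < |y - x₂| ≤ R + |x₂ - x₁|`, or violates `(y - x₂)·e₂ ≥ 0`, and then lies in the slab
`0 ≤ (y - x₁)·e₁ ≤ R |e₂ - e₁| + |x₂ - x₁|` of `B_R(x₁)`. For `|x₂ - x₁| ≤ R` the annulus has volume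
`O(|x₂ - x₁|)`, and after a rotation taking `e₁` to a coordinate vector the slab lies in a box of
volume `O(R |e₂ - e₁| + |x₂ - x₁|)`. If `|x₂ - x₁| + |e₂ - e₁| ≥ R`, the bound `2 |B_R|` suffices.
-/

open Metric Set Module

section Annulus

variable {E : Type*} [NormedAddCommGroup E] [NormedSpace ℝ E] [MeasurableSpace E] [BorelSpace E]
  [FiniteDimensional ℝ E] (μ : Measure E) [μ.IsAddHaarMeasure]

theorem addHaar_closedBall_diff_closedBall_le (x : E) {R h : ℝ} (hR : 0 ≤ R) (hh : 0 ≤ h) :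
    μ (closedBall x (R + h) \ closedBall x R) ≤
      ENNReal.ofReal (finrank ℝ E * (R + h) ^ (finrank ℝ E - 1) * h * μ.real (ball 0 1)) := by
  set n := finrank ℝ E
  have hpow : (R + h) ^ n - R ^ n ≤ n * (R + h) ^ (n - 1) * h := by
    calc (R + h) ^ n - R ^ n ≤ |(R + h) ^ n - R ^ n| := le_abs_self _
      _ ≤ |R + h - R| * n * max |R + h| |R| ^ (n - 1) := abs_pow_sub_pow_le ..
      _ = n * (R + h) ^ (n - 1) * h := by
        rw [add_sub_cancel_left, abs_of_nonneg hh, abs_of_nonneg (by positivity), abs_of_nonneg hR,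
          max_eq_left (by linarith)]
        ring
  rw [measure_sdiff (closedBall_subset_closedBall (le_add_of_nonneg_right hh))
      measurableSet_closedBall.nullMeasurableSet measure_closedBall_lt_top.ne,
    Measure.addHaar_closedBall μ x (by positivity), Measure.addHaar_closedBall μ x hR,
    ← ENNReal.sub_mul fun _ _ ↦ measure_ball_lt_top.ne, ← ENNReal.ofReal_sub _ (by positivity),
    ← ofReal_measureReal,
    ← ENNReal.ofReal_mul (by linarith [pow_le_pow_left₀ hR (le_add_of_nonneg_right hh) n])]
  gcongr

end Annulus

namespace EuclideanSpace

variable {ι : Type*} [Fintype ι]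

theorem volume_setOf_norm_le_apply_mem_Icc_le {R : ℝ} (hR : 0 ≤ R) (a b : ℝ) (i : ι) :
    volume {w : EuclideanSpace ℝ ι | ‖w‖ ≤ R ∧ w i ∈ Icc a b} ≤
      ENNReal.ofReal ((b - a) * (2 * R) ^ (Fintype.card ι - 1)) := by
  classical
  set box : ι → Set ℝ := Function.update (fun _ ↦ Icc (-R) R) i (Icc a b)
  have hsub :
      {w : EuclideanSpace ℝ ι | ‖w‖ ≤ R ∧ w i ∈ Icc a b} ⊆ WithLp.ofLp ⁻¹' pi univ box := by
    rintro w ⟨hw, hwi⟩ j -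
    rcases eq_or_ne j i with rfl | hj
    · simpa [box] using hwi
    · simpa [box, hj] using abs_le.mp ((PiLp.norm_apply_le w j).trans hw)
  have hbox : ∀ j ∈ Finset.univ.erase i, volume (box j) = ENNReal.ofReal (2 * R) := fun j hj ↦ by
    simp [box, Finset.ne_of_mem_erase hj, Real.volume_Icc, two_mul]
  have hbox_i : volume (box i) = ENNReal.ofReal (b - a) := by simp [box, Real.volume_Icc]
  calc volume _ ≤ volume (WithLp.ofLp ⁻¹' pi univ box) := measure_mono hsub
    _ = ∏ j, volume (box j) := by
      rw [(PiLp.volume_preserving_ofLp ι).measure_preimage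
        (MeasurableSet.univ_pi fun j ↦ ?_).nullMeasurableSet, volume_pi_pi]
      rcases eq_or_ne j i with rfl | hj <;> simp [box, *]
    _ = _ := by
      rw [← Finset.mul_prod_erase _ _ (Finset.mem_univ i), Finset.prod_congr rfl hbox,
        Finset.prod_const, Finset.card_erase_of_mem (Finset.mem_univ i), Finset.card_univ,
        ← ENNReal.ofReal_pow (by positivity), hbox_i,
        ← ENNReal.ofReal_mul' (by positivity)]

theorem volume_setOf_mem_closedBall_inner_mem_Icc_le {R : ℝ} (hR : 0 ≤ R) (δ : ℝ)
    (x e : EuclideanSpace ℝ ι) (he : ‖e‖ = 1) :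
    volume {y | y ∈ closedBall x R ∧ ⟪y - x, e⟫ ∈ Icc 0 δ} ≤
      ENNReal.ofReal (δ * (2 * R) ^ (Fintype.card ι - 1)) := by
  classical
  obtain ⟨i⟩ : Nonempty ι := by
    by_contra! h
    simp [Subsingleton.elim e 0] at he
  set f := Submodule.reflection (ℝ ∙ (e - single i 1))ᗮ
  have hfe : f e = single i 1 := Submodule.reflection_sub (by simp [he])
  have hf : MeasurePreserving (fun y ↦ f (y - x)) volume volume :=
    f.measurePreserving.comp (measurePreserving_sub_right volume x)
  have hpre : {y | y ∈ closedBall x R ∧ ⟪y - x, e⟫ ∈ Icc 0 δ} =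
      (fun y ↦ f (y - x)) ⁻¹' {w | ‖w‖ ≤ R ∧ w i ∈ Icc 0 δ} := by
    ext y
    rw [mem_preimage, mem_ofPred_eq, mem_ofPred_eq, mem_closedBall, dist_eq_norm, f.norm_map,
      ← f.inner_map_map, hfe, inner_single_right]
    simp
  rw [hpre]
  simpa only [sub_zero] using
    (hf.measure_preimage_le _).trans (volume_setOf_norm_le_apply_mem_Icc_le hR 0 δ i)

end EuclideanSpace

section HalfBall

variable {d : ℕ} {R : ℝ} {x₁ x₂ e₁ e₂ : EuclideanSpace ℝ (Fin d)}

theorem halfBall_diff_halfBall_subset (he₂ : ‖e₂‖ = 1) :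
    halfBall R x₁ e₁ \ halfBall R x₂ e₂ ⊆
      (closedBall x₂ (R + ‖x₂ - x₁‖) \ closedBall x₂ R) ∪
      {y | y ∈ closedBall x₁ R ∧ ⟪y - x₁, e₁⟫ ∈ Icc 0 (R * ‖e₂ - e₁‖ + ‖x₂ - x₁‖)} := by
  rintro y ⟨⟨hy₁, hye₁⟩, hy₂⟩
  rw [mem_closedBall, dist_eq_norm] at hy₁
  by_cases hyB : y ∈ closedBall x₂ R
  · have hye₂ : ⟪y - x₂, e₂⟫ < 0 := lt_of_not_ge fun h ↦ hy₂ ⟨hyB, h⟩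
    have hsplit : ⟪y - x₁, e₁⟫ = ⟪y - x₂, e₂⟫ + ⟪y - x₁, e₁ - e₂⟫ + ⟪x₂ - x₁, e₂⟫ := by
      simp only [inner_sub_left, inner_sub_right]
      ring
    have hdir : ⟪y - x₁, e₁ - e₂⟫ ≤ R * ‖e₂ - e₁‖ := by
      rw [norm_sub_rev e₂]
      exact (real_inner_le_norm _ _).trans (by gcongr)
    have hshift : ⟪x₂ - x₁, e₂⟫ ≤ ‖x₂ - x₁‖ := by
      simpa [he₂] using real_inner_le_norm (x₂ - x₁) e₂
    exact Or.inr ⟨mem_closedBall_iff_norm.mpr hy₁, hye₁, by linarith⟩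
  · refine Or.inl ⟨mem_closedBall_iff_norm.mpr ?_, hyB⟩
    calc ‖y - x₂‖ ≤ ‖y - x₁‖ + ‖x₂ - x₁‖ :=
          norm_sub_rev x₂ x₁ ▸ norm_sub_le_norm_sub_add_norm_sub ..
      _ ≤ R + ‖x₂ - x₁‖ := by gcongr

theorem volume_halfBall_le (hR : 0 ≤ R) (x e : EuclideanSpace ℝ (Fin d)) :
    volume (halfBall R x e) ≤
      ENNReal.ofReal (R ^ d * volume.real (ball (0 : EuclideanSpace ℝ (Fin d)) 1)) := by
  have hvol := Measure.addHaar_real_closedBall volume x hR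
  rw [finrank_euclideanSpace_fin] at hvol
  rw [← hvol, ofReal_measureReal measure_closedBall_lt_top.ne]
  exact measure_mono fun y hy ↦ hy.1

theorem volume_halfBall_diff_halfBall_le (hR : 0 ≤ R) (hx : ‖x₂ - x₁‖ ≤ R) (he₁ : ‖e₁‖ = 1)
    (he₂ : ‖e₂‖ = 1) :
    volume (halfBall R x₁ e₁ \ halfBall R x₂ e₂) ≤
      ENNReal.ofReal ((2 * R) ^ (d - 1) *
        (d * volume.real (ball (0 : EuclideanSpace ℝ (Fin d)) 1) + R + 1) *
          (‖x₂ - x₁‖ + ‖e₂ - e₁‖)) := by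
  set h := ‖x₂ - x₁‖
  set ε := ‖e₂ - e₁‖
  set V := volume.real (ball (0 : EuclideanSpace ℝ (Fin d)) 1)
  have hannulus := addHaar_closedBall_diff_closedBall_le volume x₂ hR (norm_nonneg (x₂ - x₁))
  have hslab :=
    EuclideanSpace.volume_setOf_mem_closedBall_inner_mem_Icc_le hR (R * ε + h) x₁ e₁ he₁
  rw [finrank_euclideanSpace_fin] at hannulus
  rw [Fintype.card_fin] at hslab
  have hP : 0 ≤ (2 * R) ^ (d - 1) := by positivity
  calc volume (halfBall R x₁ e₁ \ halfBall R x₂ e₂)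
      ≤ volume (closedBall x₂ (R + h) \ closedBall x₂ R) +
          volume {y | y ∈ closedBall x₁ R ∧ ⟪y - x₁, e₁⟫ ∈ Icc 0 (R * ε + h)} :=
        (measure_mono (halfBall_diff_halfBall_subset he₂)).trans (measure_union_le _ _)
    _ ≤ ENNReal.ofReal (d * (R + h) ^ (d - 1) * h * V) +
          ENNReal.ofReal ((R * ε + h) * (2 * R) ^ (d - 1)) := add_le_add hannulus hslab
    _ ≤ ENNReal.ofReal (d * (2 * R) ^ (d - 1) * h * V) +
          ENNReal.ofReal ((R * ε + h) * (2 * R) ^ (d - 1)) := by gcongr; linarith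
    _ ≤ _ := by
      rw [← ENNReal.ofReal_add (by positivity) (by positivity)]
      gcongr ENNReal.ofReal ?_
      linarith [mul_nonneg hP (mul_nonneg hR (norm_nonneg (x₂ - x₁))),
        mul_nonneg hP (mul_nonneg (show 0 ≤ d * V + 1 by positivity) (norm_nonneg (e₂ - e₁)))]

end HalfBall

theorem stmt_14 {d : ℕ} (R : ℝ) (hR : 0 < R) :
    ∃ K > (0 : ℝ), ∀ x₁ x₂ e₁ e₂ : EuclideanSpace ℝ (Fin d), ‖e₁‖ = 1 → ‖e₂‖ = 1 →
      volume ((halfBall R x₁ e₁ \ halfBall R x₂ e₂) ∪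
              (halfBall R x₂ e₂ \ halfBall R x₁ e₁)) ≤
        ENNReal.ofReal (K * (‖x₂ - x₁‖ + ‖e₂ - e₁‖)) := by
  set V := volume.real (ball (0 : EuclideanSpace ℝ (Fin d)) 1)
  set C := (2 * R) ^ (d - 1) * (d * V + R + 1)
  refine ⟨2 * C + 2 * R ^ d * V / R, by positivity, fun x₁ x₂ e₁ e₂ he₁ he₂ ↦ ?_⟩
  refine (measure_union_le _ _).trans ?_
  rcases le_or_gt R (‖x₂ - x₁‖ + ‖e₂ - e₁‖) with hfar | hnear
  · calc _ ≤ volume (halfBall R x₁ e₁) + volume (halfBall R x₂ e₂) :=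
          add_le_add (measure_mono sdiff_subset) (measure_mono sdiff_subset)
      _ ≤ ENNReal.ofReal (R ^ d * V) + ENNReal.ofReal (R ^ d * V) :=
          add_le_add (volume_halfBall_le hR.le _ _) (volume_halfBall_le hR.le _ _)
      _ = ENNReal.ofReal (2 * R ^ d * V / R * R) := by
        rw [← ENNReal.ofReal_add (by positivity) (by positivity), div_mul_cancel₀ _ hR.ne']
        ring_nf
      _ ≤ _ := by gcongr; linarith [show 0 ≤ C by positivity]
  · have hx : ‖x₂ - x₁‖ ≤ R := by linarith [norm_nonneg (e₂ - e₁)]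
    have h₁₂ := volume_halfBall_diff_halfBall_le hR.le hx he₁ he₂
    have h₂₁ := volume_halfBall_diff_halfBall_le hR.le (norm_sub_rev x₁ x₂ ▸ hx) he₂ he₁
    rw [norm_sub_rev x₁, norm_sub_rev e₁] at h₂₁
    calc _ ≤ _ := add_le_add h₁₂ h₂₁
      _ = ENNReal.ofReal (2 * C * (‖x₂ - x₁‖ + ‖e₂ - e₁‖)) := by
        rw [← ENNReal.ofReal_add (by positivity) (by positivity)]
        congr 1
        ring
      _ ≤ _ := by gcongr; linarith [show 0 ≤ 2 * R ^ d * V / R by positivity]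
end

section
/- Let μ be a finite measure on ℝ^d bounded above by a multiple of Lebesgue measure, i.e., μ(E) ≤ M·L^d(E) for all Borel E. For x ∈ ℝ^d and a measurable family of sets A(x) ⊆ B_R(x), define ν(x) = (β/R) ∫_{A(x)} (x − y) dμ(y). If the sets satisfy L^d(A(x₁) △ A(x₂)) ≤ K|x₂ − x₁| for all x₁, x₂, then ν is Lipschitz continuous with constant at most (β/R)(μ(ℝ^d) + M·K·R + M·K·R) ≤ (β/R)(μ(ℝ^d) + 2MKR); in particular ν is Lipschitz. -/
/-!
Splitting `A x₁` and `A x₂` along their intersection, on `A x₁ ∩ A x₂` the integrands differ by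
the constant `x₂ - x₁`, which contributes at most `μ(ℝᵈ) ‖x₂ - x₁‖`. The two remaining pieces
live on `A x₂ \ A x₁` and `A x₁ \ A x₂`, where the integrand has norm at most `R`; their
`μ`-measure is at most `M` times their Lebesgue measure, hence at most `M K ‖x₂ - x₁‖`.
-/

open MeasureTheory

section

variable {α : Type*} [MeasurableSpace α] {μ : Measure α}

theorem setIntegral_sub_setIntegral_eq_inter_add_sdiff {E : Type*} [NormedAddCommGroup E]
    [NormedSpace ℝ E] [CompleteSpace E] {f g : α → E}
    {s t : Set α} (hs : MeasurableSet s) (ht : MeasurableSet t) (hf : IntegrableOn f t μ)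
    (hg : IntegrableOn g s μ) :
    ∫ y in t, f y ∂μ - ∫ y in s, g y ∂μ =
      ∫ y in s ∩ t, (f y - g y) ∂μ + ∫ y in t \ s, f y ∂μ - ∫ y in s \ t, g y ∂μ := by
  rw [← integral_inter_add_sdiff hs hf, ← integral_inter_add_sdiff ht hg, Set.inter_comm t s,
    integral_sub (hf.mono_set Set.inter_subset_right) (hg.mono_set Set.inter_subset_left)]
  abel

theorem measureReal_le_mul_of_le_ofReal_mul {ν : Measure α} {M c : ℝ} (hM : 0 ≤ M)
    (hc : 0 ≤ c) (hμν : ∀ E, MeasurableSet E → μ E ≤ ENNReal.ofReal M * ν E) {u : Set α}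
    (hu : MeasurableSet u) (hνu : ν u ≤ ENNReal.ofReal c) : μ.real u ≤ M * c := by
  refine ENNReal.toReal_le_of_le_ofReal (by positivity) ?_
  calc μ u ≤ ENNReal.ofReal M * ν u := hμν u hu
    _ ≤ ENNReal.ofReal M * ENNReal.ofReal c := by gcongr
    _ = ENNReal.ofReal (M * c) := (ENNReal.ofReal_mul hM).symm

end

section

variable {E : Type*} [NormedAddCommGroup E] [MeasurableSpace E]
  {μ : Measure E} {x : E} {R : ℝ} {s : Set E}

theorem integrableOn_const_sub_of_subset_closedBall [OpensMeasurableSpace E]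
    [SecondCountableTopology E] (hs : MeasurableSet s) (hμs : μ s ≠ ⊤)
    (hsub : s ⊆ Metric.closedBall x R) : IntegrableOn (fun y => x - y) s μ :=
  Measure.integrableOn_of_bounded hμs (continuous_const.sub continuous_id).aestronglyMeasurable
    ((ae_restrict_mem hs).mono fun _ hy => mem_closedBall_iff_norm'.mp (hsub hy))

theorem norm_setIntegral_const_sub_le [NormedSpace ℝ E] (hμs : μ s < ⊤)
    (hsub : s ⊆ Metric.closedBall x R) :
    ‖∫ y in s, (x - y) ∂μ‖ ≤ R * μ.real s :=
  norm_setIntegral_le_of_norm_le_const hμs fun _ hy => mem_closedBall_iff_norm'.mp (hsub hy)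

theorem norm_setIntegral_const_sub_sub_le [NormedSpace ℝ E] [CompleteSpace E]
    [OpensMeasurableSpace E] [SecondCountableTopology E] [IsFiniteMeasure μ] {x₁ x₂ : E}
    {t : Set E} (hs : MeasurableSet s) (ht : MeasurableSet t) (hs₁ : s ⊆ Metric.closedBall x₁ R)
    (ht₂ : t ⊆ Metric.closedBall x₂ R) :
    ‖∫ y in t, (x₂ - y) ∂μ - ∫ y in s, (x₁ - y) ∂μ‖ ≤
      μ.real Set.univ * ‖x₂ - x₁‖ + R * μ.real (t \ s) + R * μ.real (s \ t) := by
  rw [setIntegral_sub_setIntegral_eq_inter_add_sdiff hs ht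
    (integrableOn_const_sub_of_subset_closedBall ht (measure_ne_top μ t) ht₂)
    (integrableOn_const_sub_of_subset_closedBall hs (measure_ne_top μ s) hs₁)]
  have hconst : ∀ y : E, (x₂ - y) - (x₁ - y) = x₂ - x₁ := fun y => by abel
  simp only [hconst, setIntegral_const]
  have hinter : ‖μ.real (s ∩ t) • (x₂ - x₁)‖ ≤ μ.real Set.univ * ‖x₂ - x₁‖ := by
    rw [norm_smul, Real.norm_of_nonneg measureReal_nonneg]
    exact mul_le_mul_of_nonneg_right (measureReal_mono (Set.subset_univ _)) (norm_nonneg _)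
  have hts : ‖∫ y in t \ s, (x₂ - y) ∂μ‖ ≤ R * μ.real (t \ s) :=
    norm_setIntegral_const_sub_le (measure_lt_top μ _) (Set.sdiff_subset.trans ht₂)
  have hst : ‖∫ y in s \ t, (x₁ - y) ∂μ‖ ≤ R * μ.real (s \ t) :=
    norm_setIntegral_const_sub_le (measure_lt_top μ _) (Set.sdiff_subset.trans hs₁)
  exact (norm_sub_le _ _).trans (add_le_add ((norm_add_le _ _).trans (add_le_add hinter hts)) hst)

end

theorem stmt_15 {d : ℕ} (β R M K : ℝ) (hβ : 0 < β) (hR : 0 < R) (hM : 0 < M) (hK : 0 < K)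
    (μ : Measure (EuclideanSpace ℝ (Fin d))) [IsFiniteMeasure μ]
    (hμM : ∀ E : Set (EuclideanSpace ℝ (Fin d)), MeasurableSet E →
      μ E ≤ ENNReal.ofReal M * volume E)
    (A : EuclideanSpace ℝ (Fin d) → Set (EuclideanSpace ℝ (Fin d)))
    (hAmeas : ∀ x, MeasurableSet (A x))
    (hAsub : ∀ x, A x ⊆ Metric.closedBall x R)
    (hAdiff : ∀ x₁ x₂, volume ((A x₁ \ A x₂) ∪ (A x₂ \ A x₁)) ≤
      ENNReal.ofReal (K * ‖x₂ - x₁‖))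
    (ν : EuclideanSpace ℝ (Fin d) → EuclideanSpace ℝ (Fin d))
    (hν : ∀ x, ν x = (β / R) • ∫ y in A x, (x - y) ∂μ) :
    LipschitzWith (Real.toNNReal ((β / R) * ((μ Set.univ).toReal + 2 * M * K * R))) ν := by
  refine LipschitzWith.of_dist_le_mul fun x₂ x₁ => ?_
  have hsdiff : ∀ {u}, u ⊆ (A x₁ \ A x₂) ∪ (A x₂ \ A x₁) → MeasurableSet u →
      μ.real u ≤ M * (K * ‖x₂ - x₁‖) := fun hu hmeas =>
    measureReal_le_mul_of_le_ofReal_mul hM.le (by positivity) hμM hmeas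
      ((measure_mono hu).trans (hAdiff x₁ x₂))
  have h₂₁ := hsdiff Set.subset_union_right ((hAmeas x₂).diff (hAmeas x₁))
  have h₁₂ := hsdiff Set.subset_union_left ((hAmeas x₁).diff (hAmeas x₂))
  have hint := norm_setIntegral_const_sub_sub_le (μ := μ) (hAmeas x₁) (hAmeas x₂) (hAsub x₁)
    (hAsub x₂)
  rw [Real.coe_toNNReal _ (by positivity), dist_eq_norm, dist_eq_norm, hν, hν, ← smul_sub,
    norm_smul, Real.norm_of_nonneg (by positivity), ← measureReal_def]
  calc β / R * ‖∫ y in A x₂, (x₂ - y) ∂μ - ∫ y in A x₁, (x₁ - y) ∂μ‖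
      ≤ β / R * (μ.real Set.univ * ‖x₂ - x₁‖ + R * (M * (K * ‖x₂ - x₁‖))
          + R * (M * (K * ‖x₂ - x₁‖))) := by
        gcongr
        exact hint.trans (by gcongr)
    _ = β / R * (μ.real Set.univ + 2 * M * K * R) * ‖x₂ - x₁‖ := by ring
end
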